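/- In the orthogonal design case where the LAR estimate is coordinatewise soft thresholding μ̂_j = η_λ(y_j) with data y ~ N(μ, σ²I_n), the degrees of freedom df = ∑_j Cov(μ̂_j, y_j)/σ² equals the expected number of coordinates with |y_j| > λ, i.e., df = E[#{j : |y_j| > λ}]. -/

import Mathlib

open MeasureTheory ProbabilityTheory Real Set Filter
open scoped NNReal ENNReal Topology

noncomputable def softThreshold (lam z : ℝ) : ℝ :=
  Real.sign z * max (|z| - lam) 0

lemma softThreshold_eq {lam : ℝ} (hlam : 0 ≤ lam) (z : ℝ) :
    softThreshold lam z = max (z - lam) 0 - max (-z - lam) 0 := by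
  unfold softThreshold
  rcases lt_trichotomy z 0 with hz | hz | hz
  · rw [Real.sign_of_neg hz, abs_of_neg hz,
      max_eq_right (a := z - lam) (by linarith)]
    ring
  · subst hz
    simp [max_eq_right (by linarith : -(0:ℝ) - lam ≤ 0),
      max_eq_right (by linarith : (0:ℝ) - lam ≤ 0)]
  · rw [Real.sign_of_pos hz, abs_of_pos hz,
      max_eq_right (a := -z - lam) (by linarith)]
    ring

section onedim

variable (m : ℝ) (v : ℝ≥0)

lemma pdf_eq (x : ℝ) :
    gaussianPDFReal m v x = (√(2 * π * v))⁻¹ * rexp (-(2 * (v:ℝ))⁻¹ * (x - m) ^ 2) := by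
  rw [gaussianPDFReal]
  congr 1
  rw [Real.exp_eq_exp]
  ring

lemma continuous_pdf : Continuous (gaussianPDFReal m v) := by
  simp only [gaussianPDFReal_def]
  fun_prop

lemma hasDerivAt_pdf (hv : v ≠ 0) (x : ℝ) :
    HasDerivAt (gaussianPDFReal m v)
      (-((x - m) / v) * gaussianPDFReal m v x) x := by
  have hv' : (v:ℝ) ≠ 0 := by exact_mod_cast hv
  have h1 : HasDerivAt (fun y : ℝ => -(y - m) ^ 2 / (2 * (v:ℝ)))
      (-(2 * (x - m) ^ 1 * 1) / (2 * (v:ℝ))) x := by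
    exact (((hasDerivAt_id x).sub_const m).pow 2).neg.div_const _
  have h2 := (h1.exp).const_mul (√(2 * π * v))⁻¹
  refine h2.congr_deriv ?_
  rw [gaussianPDFReal]
  field_simp

lemma integrable_poly_mul_pdf (k : ℕ) :
    Integrable (fun x => (x - m) ^ k * gaussianPDFReal m v x) := by
  by_cases hv : v = 0
  · simp [hv]
  have hb : (0:ℝ) < (2 * (v:ℝ))⁻¹ := by
    have : (0:ℝ) < v := by exact_mod_cast pos_iff_ne_zero.2 hv
    positivity
  have h0 : Integrable (fun t : ℝ => t ^ (k:ℝ) * rexp (-(2 * (v:ℝ))⁻¹ * t ^ 2)) :=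
    integrable_rpow_mul_exp_neg_mul_sq hb
      (lt_of_lt_of_le (by norm_num) (Nat.cast_nonneg k))
  have h1 : Integrable (fun t : ℝ =>
      t ^ k * ((√(2 * π * (v:ℝ)))⁻¹ * rexp (-(2 * (v:ℝ))⁻¹ * t ^ 2))) := by
    have e : (fun t : ℝ => t ^ k * ((√(2 * π * (v:ℝ)))⁻¹ * rexp (-(2 * (v:ℝ))⁻¹ * t ^ 2)))
        = fun t : ℝ => (√(2 * π * (v:ℝ)))⁻¹ * (t ^ (k:ℝ) * rexp (-(2 * (v:ℝ))⁻¹ * t ^ 2)) := by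
      funext t
      rw [Real.rpow_natCast]
      ring
    rw [e]
    exact h0.const_mul _
  have h2 := h1.comp_sub_right m
  have e2 : (fun x : ℝ => (x - m) ^ k * gaussianPDFReal m v x)
      = fun x : ℝ => (x - m) ^ k * ((√(2 * π * (v:ℝ)))⁻¹ * rexp (-(2 * (v:ℝ))⁻¹ * (x - m) ^ 2)) := by
    funext x
    rw [pdf_eq]
  rw [e2]
  exact h2

lemma integrable_quad_bound {g : ℝ → ℝ} (hg : Continuous g) (C : ℝ)
    (hC : ∀ x, |g x| ≤ C * (1 + (x - m) ^ 2)) :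
    Integrable (fun x => g x * gaussianPDFReal m v x) := by
  have hmaj : Integrable (fun x =>
      C * gaussianPDFReal m v x + C * ((x - m) ^ 2 * gaussianPDFReal m v x)) :=
    ((integrable_gaussianPDFReal m v).const_mul C).add
      ((integrable_poly_mul_pdf m v 2).const_mul C)
  refine hmaj.mono' ((hg.mul (continuous_pdf m v)).aestronglyMeasurable)
    (ae_of_all _ fun x => ?_)
  have h1 : 0 ≤ gaussianPDFReal m v x := gaussianPDFReal_nonneg m v x
  have h2 := hC x
  have h3 : |g x * gaussianPDFReal m v x| = |g x| * gaussianPDFReal m v x := by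
    rw [abs_mul, abs_of_nonneg h1]
  rw [Real.norm_eq_abs, h3]
  nlinarith [abs_nonneg (g x), sq_nonneg (x - m)]

lemma tendsto_linear_mul_pdf (hv : v ≠ 0) (a : ℝ) :
    Tendsto (fun x => (x + a) * gaussianPDFReal m v x) atTop (𝓝 0) := by
  have hb : (0:ℝ) < (2 * (v:ℝ))⁻¹ := by
    have : (0:ℝ) < v := by exact_mod_cast pos_iff_ne_zero.2 hv
    positivity
  set c := (√(2 * π * (v:ℝ)))⁻¹ with hc
  set b := (2 * (v:ℝ))⁻¹ with hbdef
  have key : Tendsto (fun t : ℝ => c * ((t + (a + m)) * rexp (-b * t ^ 2))) atTop (𝓝 0) := by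
    have ht1 : Tendsto (fun t : ℝ => t * rexp (-b * t ^ 2)) atTop (𝓝 0) := by
      have hO := rpow_mul_exp_neg_mul_sq_isLittleO_exp_neg hb 1
      have hO' : (fun t : ℝ => t * rexp (-b * t ^ 2)) =o[atTop]
          fun t : ℝ => rexp (-(1/2) * t) := by
        refine hO.congr' (Eventually.of_forall fun t => ?_) (Eventually.of_forall fun t => rfl)
        simp [Real.rpow_one]
      refine hO'.trans_tendsto ?_
      exact Real.tendsto_exp_atBot.comp
        (tendsto_id.const_mul_atTop_of_neg (by norm_num : (-(1/2):ℝ) < 0))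
    have ht2 : Tendsto (fun t : ℝ => rexp (-b * t ^ 2)) atTop (𝓝 0) := by
      refine Real.tendsto_exp_atBot.comp ?_
      have h2 : Tendsto (fun t : ℝ => t ^ 2) atTop atTop := tendsto_pow_atTop two_ne_zero
      exact h2.const_mul_atTop_of_neg (neg_lt_zero.2 hb)
    have := (ht1.add (ht2.const_mul (a + m))).const_mul c
    simpa [mul_add, add_mul] using this
  have hcomp := key.comp (tendsto_atTop_add_const_right atTop (-m) tendsto_id)
  refine hcomp.congr fun x => ?_
  show c * ((id x + -m + (a + m)) * rexp (-b * (id x + -m) ^ 2))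
      = (x + a) * gaussianPDFReal m v x
  rw [pdf_eq]
  have e2 : (id x + -m) = x - m := by simp [sub_eq_add_neg]
  rw [e2]
  ring


lemma integrable_lin_quad (a : ℝ) :
    Integrable (fun x => ((x + a) * (x - m)) * gaussianPDFReal m v x) := by
  refine integrable_quad_bound m v (by fun_prop) (1 + |m + a|) fun x => ?_
  have h1 : |x + a| ≤ |x - m| + |m + a| := by
    calc |x + a| = |(x - m) + (m + a)| := by ring_nf
    _ ≤ |x - m| + |m + a| := abs_add_le _ _
  rw [abs_mul]
  nlinarith [sq_nonneg (|x - m| - 1), abs_nonneg (x - m), abs_nonneg (m + a), sq_abs (x - m),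
    mul_le_mul_of_nonneg_right h1 (abs_nonneg (x - m))]

lemma integrable_centered (hv : v ≠ 0) :
    Integrable (fun x => (x - m) * gaussianPDFReal m v x) := by
  have := integrable_poly_mul_pdf m v 1
  simpa using this

lemma pdf_neg (x : ℝ) : gaussianPDFReal m v (-x) = gaussianPDFReal (-m) v x := by
  rw [gaussianPDFReal, gaussianPDFReal]
  congr 1
  rw [Real.exp_eq_exp]
  ring

lemma tendsto_pdf_atTop (hv : v ≠ 0) :
    Tendsto (gaussianPDFReal m v) atTop (𝓝 0) := by
  have hb : (0:ℝ) < (2 * (v:ℝ))⁻¹ := by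
    have : (0:ℝ) < v := by exact_mod_cast pos_iff_ne_zero.2 hv
    positivity
  have ht2 : Tendsto (fun t : ℝ => rexp (-(2 * (v:ℝ))⁻¹ * t ^ 2)) atTop (𝓝 0) := by
    refine Real.tendsto_exp_atBot.comp ?_
    have h2 : Tendsto (fun t : ℝ => t ^ 2) atTop atTop := tendsto_pow_atTop two_ne_zero
    exact h2.const_mul_atTop_of_neg (neg_lt_zero.2 hb)
  have key : Tendsto (fun t : ℝ => (√(2 * π * (v:ℝ)))⁻¹ *
      rexp (-(2 * (v:ℝ))⁻¹ * t ^ 2)) atTop (𝓝 0) := by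
    have := ht2.const_mul ((√(2 * π * (v:ℝ)))⁻¹)
    simpa using this
  have hcomp := key.comp (tendsto_atTop_add_const_right atTop (-m) tendsto_id)
  refine hcomp.congr fun x => ?_
  show (√(2 * π * (v:ℝ)))⁻¹ * rexp (-(2 * (v:ℝ))⁻¹ * (id x + -m) ^ 2) = gaussianPDFReal m v x
  rw [pdf_eq]
  have e2 : (id x + -m) = x - m := by simp [sub_eq_add_neg]
  rw [e2]

lemma tendsto_pdf_atBot (hv : v ≠ 0) :
    Tendsto (gaussianPDFReal m v) atBot (𝓝 0) := by
  have := (tendsto_pdf_atTop (-m) v hv).comp tendsto_neg_atBot_atTop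
  refine this.congr fun x => ?_
  show gaussianPDFReal (-m) v (-x) = gaussianPDFReal m v x
  rw [pdf_neg, neg_neg]

lemma tendsto_linear_mul_pdf_atBot (hv : v ≠ 0) (a : ℝ) :
    Tendsto (fun x => (-x + a) * gaussianPDFReal m v x) atBot (𝓝 0) := by
  have := (tendsto_linear_mul_pdf (-m) v hv a).comp tendsto_neg_atBot_atTop
  refine this.congr fun x => ?_
  show (-x + a) * gaussianPDFReal (-m) v (-x) = (-x + a) * gaussianPDFReal m v x
  rw [pdf_neg, neg_neg]

lemma integral_centered_eq_zero (hv : v ≠ 0) :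
    ∫ x, (x - m) * gaussianPDFReal m v x = 0 := by
  have hv' : (v:ℝ) ≠ 0 := by exact_mod_cast hv
  have hder : ∀ x : ℝ, HasDerivAt (fun y => -(v:ℝ) * gaussianPDFReal m v y)
      ((x - m) * gaussianPDFReal m v x) x := by
    intro x
    have := (hasDerivAt_pdf m v hv x).const_mul (-(v:ℝ))
    refine this.congr_deriv ?_
    field_simp
  have hcont : Continuous (fun y => -(v:ℝ) * gaussianPDFReal m v y) :=
    continuous_const.mul (continuous_pdf m v)
  have hint := integrable_centered m v hv
  have htop : Tendsto (fun y => -(v:ℝ) * gaussianPDFReal m v y) atTop (𝓝 0) := by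
    have := (tendsto_pdf_atTop m v hv).const_mul (-(v:ℝ))
    simpa using this
  have hbot : Tendsto (fun y => -(v:ℝ) * gaussianPDFReal m v y) atBot (𝓝 0) := by
    have := (tendsto_pdf_atBot m v hv).const_mul (-(v:ℝ))
    simpa using this
  have h1 : ∫ x in Ioi m, (x - m) * gaussianPDFReal m v x
      = 0 - (-(v:ℝ) * gaussianPDFReal m v m) :=
    integral_Ioi_of_hasDerivAt_of_tendsto hcont.continuousWithinAt
      (fun x _ => hder x) hint.integrableOn htop
  have h2 : ∫ x in Iic m, (x - m) * gaussianPDFReal m v x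
      = -(v:ℝ) * gaussianPDFReal m v m - 0 :=
    integral_Iic_of_hasDerivAt_of_tendsto hcont.continuousWithinAt
      (fun x _ => hder x) hint.integrableOn hbot
  rw [← intervalIntegral.integral_Iic_add_Ioi hint.integrableOn hint.integrableOn, h1, h2]
  ring

lemma claim_pos (hv : v ≠ 0) (lam : ℝ) :
    ∫ x, max (x - lam) 0 * ((x - m) * gaussianPDFReal m v x)
      = (v:ℝ) * ∫ x in Ioi lam, gaussianPDFReal m v x := by
  have hv' : (v:ℝ) ≠ 0 := by exact_mod_cast hv
  set f := gaussianPDFReal m v with hf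
  have hquad : Integrable (fun x => ((x + -lam) * (x - m)) * f x) :=
    integrable_lin_quad m v (-lam)
  have hquad' : Integrable (fun x => ((x - lam) * (x - m)) * f x) := by
    refine hquad.congr (ae_of_all _ fun x => ?_)
    ring_nf
  have hvf : Integrable (fun x => (v:ℝ) * f x) :=
    (integrable_gaussianPDFReal m v).const_mul _
  have hder : ∀ x : ℝ, HasDerivAt (fun y => (-(v:ℝ) * (y - lam)) * f y)
      (((x - lam) * (x - m)) * f x - (v:ℝ) * f x) x := by
    intro x
    have h1 : HasDerivAt (fun y : ℝ => -(v:ℝ) * (y - lam)) (-(v:ℝ) * 1) x :=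
      ((hasDerivAt_id x).sub_const lam).const_mul _
    have h2 := hasDerivAt_pdf m v hv x
    have := h1.mul h2
    refine this.congr_deriv ?_
    field_simp
    ring
  have hcont : Continuous (fun y => (-(v:ℝ) * (y - lam)) * f y) :=
    (continuous_const.mul (continuous_id.sub continuous_const)).mul (continuous_pdf m v)
  have htop : Tendsto (fun y => (-(v:ℝ) * (y - lam)) * f y) atTop (𝓝 0) := by
    have := (tendsto_linear_mul_pdf m v hv (-lam)).const_mul (-(v:ℝ))
    rw [mul_zero] at this
    refine this.congr fun x => ?_
    show -(v:ℝ) * ((x + -lam) * f x) = (-(v:ℝ) * (x - lam)) * f x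
    ring_nf
  have hFTC : ∫ x in Ioi lam, (((x - lam) * (x - m)) * f x - (v:ℝ) * f x)
      = 0 - (-(v:ℝ) * (lam - lam)) * f lam :=
    integral_Ioi_of_hasDerivAt_of_tendsto hcont.continuousWithinAt
      (fun x _ => hder x) (hquad'.sub hvf).integrableOn htop
  rw [integral_sub hquad'.integrableOn hvf.integrableOn] at hFTC
  have hsub : ∫ x in Ioi lam, ((x - lam) * (x - m)) * f x
      = (v:ℝ) * ∫ x in Ioi lam, f x := by
    rw [← integral_const_mul]
    have : (0:ℝ) - (-(v:ℝ) * (lam - lam)) * f lam = 0 := by ring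
    rw [this] at hFTC
    linarith [hFTC]
  have e : (fun x => max (x - lam) 0 * ((x - m) * f x))
      = (Ioi lam).indicator (fun x => ((x - lam) * (x - m)) * f x) := by
    funext x
    by_cases h : x ∈ Ioi lam
    · rw [indicator_of_mem h]
      rw [max_eq_left (by simp at h; linarith : (0:ℝ) ≤ x - lam)]
      ring
    · rw [indicator_of_notMem h]
      rw [max_eq_right (by simp at h; linarith : x - lam ≤ (0:ℝ))]
      ring
  rw [e, integral_indicator measurableSet_Ioi, hsub]

lemma claim_neg (hv : v ≠ 0) (lam : ℝ) :
    ∫ x, max (-x - lam) 0 * ((x - m) * gaussianPDFReal m v x)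
      = -(v:ℝ) * ∫ x in Iio (-lam), gaussianPDFReal m v x := by
  have hv' : (v:ℝ) ≠ 0 := by exact_mod_cast hv
  set f := gaussianPDFReal m v with hf
  have hquad : Integrable (fun x => ((-x - lam) * (x - m)) * f x) := by
    refine (integrable_quad_bound m v (by fun_prop) (1 + |m + lam|) fun x => ?_)
    have h1 : |-x - lam| ≤ |x - m| + |m + lam| := by
      calc |-x - lam| = |-((x - m) + (m + lam))| := by ring_nf
      _ = |(x - m) + (m + lam)| := abs_neg _
      _ ≤ |x - m| + |m + lam| := abs_add_le _ _
    rw [abs_mul]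
    nlinarith [sq_nonneg (|x - m| - 1), abs_nonneg (x - m), abs_nonneg (m + lam), sq_abs (x - m),
      mul_le_mul_of_nonneg_right h1 (abs_nonneg (x - m))]
  have hvf : Integrable (fun x => (v:ℝ) * f x) :=
    (integrable_gaussianPDFReal m v).const_mul _
  have hder : ∀ x : ℝ, HasDerivAt (fun y => (-(v:ℝ) * (-y - lam)) * f y)
      (((-x - lam) * (x - m)) * f x + (v:ℝ) * f x) x := by
    intro x
    have h1 : HasDerivAt (fun y : ℝ => -(v:ℝ) * (-y - lam)) (-(v:ℝ) * (-1)) x := by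
      have : HasDerivAt (fun y : ℝ => -y - lam) (-1 : ℝ) x :=
        ((hasDerivAt_id x).neg).sub_const lam
      exact this.const_mul _
    have h2 := hasDerivAt_pdf m v hv x
    have := h1.mul h2
    refine this.congr_deriv ?_
    field_simp
    ring
  have hcont : Continuous (fun y => (-(v:ℝ) * (-y - lam)) * f y) :=
    (continuous_const.mul (continuous_id.neg.sub continuous_const)).mul (continuous_pdf m v)
  have hbot : Tendsto (fun y => (-(v:ℝ) * (-y - lam)) * f y) atBot (𝓝 0) := by
    have := (tendsto_linear_mul_pdf_atBot m v hv (-lam)).const_mul (-(v:ℝ))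
    rw [mul_zero] at this
    refine this.congr fun x => ?_
    show -(v:ℝ) * ((-x + -lam) * f x) = (-(v:ℝ) * (-x - lam)) * f x
    ring_nf
  have hFTC : ∫ x in Iic (-lam), (((-x - lam) * (x - m)) * f x + (v:ℝ) * f x)
      = (-(v:ℝ) * (-(-lam) - lam)) * f (-lam) - 0 :=
    integral_Iic_of_hasDerivAt_of_tendsto hcont.continuousWithinAt
      (fun x _ => hder x) (hquad.add hvf).integrableOn hbot
  rw [integral_add hquad.integrableOn hvf.integrableOn] at hFTC
  have hIicIio : ∀ g : ℝ → ℝ, ∫ x in Iic (-lam), g x = ∫ x in Iio (-lam), g x := by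
    intro g
    exact integral_Iic_eq_integral_Iio
  rw [hIicIio, hIicIio] at hFTC
  have hsub : ∫ x in Iio (-lam), ((-x - lam) * (x - m)) * f x
      = -(v:ℝ) * ∫ x in Iio (-lam), f x := by
    rw [neg_mul, ← integral_const_mul]
    have : (-(v:ℝ) * (-(-lam) - lam)) * f (-lam) - 0 = 0 := by ring
    rw [this] at hFTC
    linarith [hFTC]
  have e : (fun x => max (-x - lam) 0 * ((x - m) * f x))
      = (Iio (-lam)).indicator (fun x => ((-x - lam) * (x - m)) * f x) := by
    funext x
    by_cases h : x ∈ Iio (-lam)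
    · rw [indicator_of_mem h]
      rw [max_eq_left (by simp at h; linarith : (0:ℝ) ≤ -x - lam)]
      ring
    · rw [indicator_of_notMem h]
      rw [max_eq_right (by simp at h; linarith : -x - lam ≤ (0:ℝ))]
      ring
  rw [e, integral_indicator measurableSet_Iio, hsub]

lemma abs_soft_le {lam : ℝ} (hlam : 0 ≤ lam) (x : ℝ) :
    |max (x - lam) 0 - max (-x - lam) 0| ≤ |x| := by
  rcases le_total x 0 with hx | hx
  · rw [max_eq_right (by linarith : x - lam ≤ (0:ℝ)), zero_sub, abs_neg,
      abs_of_nonneg (le_max_right _ _), abs_of_nonpos hx]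
    exact max_le (by linarith) (by linarith)
  · rw [max_eq_right (by linarith : -x - lam ≤ (0:ℝ)), sub_zero,
      abs_of_nonneg (le_max_right _ _), abs_of_nonneg hx]
    exact max_le (by linarith) (by linarith)

lemma integral_gaussianReal_eq (hv : v ≠ 0) (g : ℝ → ℝ) :
    ∫ x, g x ∂(gaussianReal m v) = ∫ x, g x * gaussianPDFReal m v x := by
  rw [gaussianReal_of_var_ne_zero _ hv]
  have key := integral_withDensity_eq_integral_smul (μ := volume)
    (f := fun x => (gaussianPDFReal m v x).toNNReal)
    ((measurable_gaussianPDFReal m v).real_toNNReal) g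
  have hpdf : gaussianPDF m v
      = fun x => (((gaussianPDFReal m v x).toNNReal : ℝ≥0) : ℝ≥0∞) := rfl
  rw [hpdf, key]
  refine integral_congr_ae (ae_of_all _ fun x => ?_)
  simp only [NNReal.smul_def, Real.coe_toNNReal _ (gaussianPDFReal_nonneg m v x), smul_eq_mul]
  ring

lemma integral_id_pdf_eq (hv : v ≠ 0) :
    ∫ x, x * gaussianPDFReal m v x = m := by
  have e : (fun x => x * gaussianPDFReal m v x)
      = fun x => (x - m) * gaussianPDFReal m v x + m * gaussianPDFReal m v x := by
    funext x; ring
  rw [e, integral_add (integrable_centered m v hv)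
      ((integrable_gaussianPDFReal m v).const_mul m),
    integral_centered_eq_zero m v hv, integral_const_mul,
    integral_gaussianPDFReal_eq_one m hv]
  ring

lemma key1d (hv : v ≠ 0) {lam : ℝ} (hlam : 0 ≤ lam) :
    (∫ x, softThreshold lam x * x ∂(gaussianReal m v))
      - (∫ x, softThreshold lam x ∂(gaussianReal m v)) * (∫ x, x ∂(gaussianReal m v))
    = (v:ℝ) * ∫ x, (if lam < |x| then (1:ℝ) else 0) ∂(gaussianReal m v) := by
  set f := gaussianPDFReal m v with hfdef
  have hfc : Continuous f := continuous_pdf m v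
  have hfi : Integrable f := integrable_gaussianPDFReal m v
  -- integrability facts
  have I_eta_x : Integrable (fun x =>
      ((max (x - lam) 0 - max (-x - lam) 0) * x) * f x) := by
    refine integrable_quad_bound m v (by fun_prop) (2 + 2 * m ^ 2) fun x => ?_
    have h1 := abs_soft_le hlam x
    have h2 : |(max (x - lam) 0 - max (-x - lam) 0) * x| ≤ x ^ 2 := by
      rw [abs_mul, ← sq_abs x, sq]
      exact mul_le_mul_of_nonneg_right h1 (abs_nonneg x)
    nlinarith [sq_nonneg ((x - m) - m), sq_nonneg (m * (x - m))]
  have I_eta : Integrable (fun x =>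
      (max (x - lam) 0 - max (-x - lam) 0) * f x) := by
    refine integrable_quad_bound m v (by fun_prop) (1 + |m|) fun x => ?_
    have h1 := abs_soft_le hlam x
    have h2 : |x| ≤ |x - m| + |m| := by
      calc |x| = |(x - m) + m| := by ring_nf
      _ ≤ |x - m| + |m| := abs_add_le _ _
    nlinarith [sq_nonneg (|x - m| - 1), abs_nonneg (x - m), abs_nonneg m, sq_abs (x - m)]
  have I_pos : Integrable (fun x => max (x - lam) 0 * ((x - m) * f x)) := by
    have base : Integrable (fun x => (max (x - lam) 0 * (x - m)) * f x) := by
      refine integrable_quad_bound m v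
        (((continuous_id.sub continuous_const).max continuous_const).mul
          (continuous_id.sub continuous_const)) (1 + |m - lam|) fun x => ?_
      have h0 : |max (x - lam) 0| ≤ |x - lam| := by
        rw [abs_of_nonneg (le_max_right _ _)]
        exact max_le (le_abs_self _) (abs_nonneg _)
      have h1 : |x - lam| ≤ |x - m| + |m - lam| := by
        calc |x - lam| = |(x - m) + (m - lam)| := by ring_nf
        _ ≤ |x - m| + |m - lam| := abs_add_le _ _
      rw [abs_mul]
      nlinarith [sq_nonneg (|x - m| - 1), abs_nonneg (x - m), abs_nonneg (m - lam),
        sq_abs (x - m), abs_nonneg (max (x - lam) 0),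
        mul_le_mul_of_nonneg_right (h0.trans h1) (abs_nonneg (x - m))]
    refine base.congr (ae_of_all _ fun x => ?_)
    show ((max _ 0) * (x - m)) * f x = _
    rw [mul_assoc]
  have I_neg : Integrable (fun x => max (-x - lam) 0 * ((x - m) * f x)) := by
    have base : Integrable (fun x => (max (-x - lam) 0 * (x - m)) * f x) := by
      refine integrable_quad_bound m v
        (((continuous_id.neg.sub continuous_const).max continuous_const).mul
          (continuous_id.sub continuous_const)) (1 + |m + lam|) fun x => ?_
      have h0 : |max (-x - lam) 0| ≤ |-x - lam| := by
        rw [abs_of_nonneg (le_max_right _ _)]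
        exact max_le (le_abs_self _) (abs_nonneg _)
      have h1 : |-x - lam| ≤ |x - m| + |m + lam| := by
        calc |-x - lam| = |-((x - m) + (m + lam))| := by ring_nf
        _ = |(x - m) + (m + lam)| := abs_neg _
        _ ≤ |x - m| + |m + lam| := abs_add_le _ _
      rw [abs_mul]
      nlinarith [sq_nonneg (|x - m| - 1), abs_nonneg (x - m), abs_nonneg (m + lam),
        sq_abs (x - m), abs_nonneg (max (-x - lam) 0),
        mul_le_mul_of_nonneg_right (h0.trans h1) (abs_nonneg (x - m))]
    refine base.congr (ae_of_all _ fun x => ?_)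
    show ((max _ 0) * (x - m)) * f x = _
    rw [mul_assoc]
  -- rewrite all integrals via the density
  simp only [softThreshold_eq hlam]
  rw [integral_gaussianReal_eq m v hv (fun x => (max (x - lam) 0 - max (-x - lam) 0) * x),
    integral_gaussianReal_eq m v hv (fun x => max (x - lam) 0 - max (-x - lam) 0),
    integral_gaussianReal_eq m v hv (fun x => x),
    integral_gaussianReal_eq m v hv (fun x => if lam < |x| then (1:ℝ) else 0),
    integral_id_pdf_eq m v hv]
  -- LHS computation
  have estep : (∫ x, ((max (x - lam) 0 - max (-x - lam) 0) * x) * f x)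
      - (∫ x, (max (x - lam) 0 - max (-x - lam) 0) * f x) * m
      = ∫ x, (max (x - lam) 0 * ((x - m) * f x) - max (-x - lam) 0 * ((x - m) * f x)) := by
    rw [integral_sub I_pos I_neg]
    have e1 : (fun x => ((max (x - lam) 0 - max (-x - lam) 0) * x) * f x)
        = fun x => (max (x - lam) 0 * ((x - m) * f x) - max (-x - lam) 0 * ((x - m) * f x))
          + m * ((max (x - lam) 0 - max (-x - lam) 0) * f x) := by
      funext x; ring
    have Isub : Integrable (fun x =>
        max (x - lam) 0 * ((x - m) * f x) - max (-x - lam) 0 * ((x - m) * f x)) :=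
      I_pos.sub I_neg
    rw [e1, integral_add Isub (I_eta.const_mul m),
      integral_sub I_pos I_neg, integral_const_mul]
    ring
  rw [estep, integral_sub I_pos I_neg, claim_pos m v hv lam, claim_neg m v hv lam]
  -- RHS computation
  have eind : (fun x => (if lam < |x| then (1:ℝ) else 0) * f x)
      = fun x => (Ioi lam).indicator f x + (Iio (-lam)).indicator f x := by
    funext x
    by_cases h1 : lam < x
    · have hax : lam < |x| := lt_of_lt_of_le h1 (le_abs_self x)
      rw [if_pos hax, indicator_of_mem (mem_Ioi.2 h1),
        indicator_of_notMem (by simp only [mem_Iio]; push_neg; linarith)]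
      ring
    · by_cases h2 : x < -lam
      · have hax : lam < |x| := lt_of_lt_of_le (by linarith) (neg_le_abs x)
        rw [if_pos hax, indicator_of_notMem (by simp only [mem_Ioi]; push_neg; linarith),
          indicator_of_mem (mem_Iio.2 h2)]
        ring
      · have hax : ¬ lam < |x| := not_lt.2 (abs_le.2 ⟨by linarith, by linarith⟩)
        rw [if_neg hax, indicator_of_notMem (by simp only [mem_Ioi]; push_neg; linarith),
          indicator_of_notMem (by simp only [mem_Iio]; push_neg; linarith)]
        ring
  rw [eind, integral_add (hfi.indicator measurableSet_Ioi) (hfi.indicator measurableSet_Iio),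
    integral_indicator measurableSet_Ioi, integral_indicator measurableSet_Iio]
  ring

end onedim


section assemble

lemma pi_map_eval {n : ℕ} (γ : Fin n → Measure ℝ) [∀ i, IsProbabilityMeasure (γ i)]
    (j : Fin n) :
    (Measure.pi γ).map (fun y => y j) = γ j := by
  ext s hs
  rw [Measure.map_apply (measurable_pi_apply j) hs]
  have e : (fun y : Fin n → ℝ => y j) ⁻¹' s
      = Set.pi Set.univ (Function.update (fun _ => Set.univ) j s) :=
    Set.eval_preimage
  rw [e, Measure.pi_pi]
  rw [Finset.prod_eq_single j
    (fun b _ hb => by rw [Function.update_of_ne hb]; exact measure_univ)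
    (fun h => absurd (Finset.mem_univ j) h)]
  rw [Function.update_self]

lemma integral_eval {n : ℕ} (γ : Fin n → Measure ℝ) [∀ i, IsProbabilityMeasure (γ i)]
    (j : Fin n) (g : ℝ → ℝ) (hg : AEStronglyMeasurable g (γ j)) :
    ∫ y, g (y j) ∂(Measure.pi γ) = ∫ x, g x ∂(γ j) := by
  rw [← pi_map_eval γ j] at hg
  rw [← integral_map (measurable_pi_apply j).aemeasurable hg, pi_map_eval]

end assemble

theorem df_soft_thresholding
    (n : ℕ) (μ : Fin n → ℝ) (v : ℝ≥0) (hv : 0 < v) (lam : ℝ) (hlam : 0 ≤ lam)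
    (P : Measure (Fin n → ℝ))
    (hP : P = Measure.pi fun i => gaussianReal (μ i) v) :
    ∑ j, (∫ y, softThreshold lam (y j) * y j ∂P
            - (∫ y, softThreshold lam (y j) ∂P) * (∫ y, y j ∂P)) / (v : ℝ)
      = ∫ y, (∑ j, if lam < |y j| then (1:ℝ) else 0) ∂P := by
  subst hP
  have hvne : v ≠ 0 := hv.ne'
  have hv0 : (v:ℝ) ≠ 0 := by exact_mod_cast hvne
  set γ : Fin n → Measure ℝ := fun i => gaussianReal (μ i) v with hγ
  have hmeas4 : Measurable (fun x : ℝ => if lam < |x| then (1:ℝ) else 0) := by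
    refine Measurable.ite ?_ measurable_const measurable_const
    exact measurableSet_lt measurable_const continuous_abs.measurable
  have hint4 : ∀ j : Fin n, Integrable (fun y : Fin n → ℝ => if lam < |y j| then (1:ℝ) else 0)
      (Measure.pi γ) := by
    intro j
    refine (integrable_const (1:ℝ)).mono'
      ((hmeas4.comp (measurable_pi_apply j)).aestronglyMeasurable)
      (ae_of_all _ fun y => ?_)
    by_cases h : lam < |y j| <;> simp [h]
  rw [integral_finset_sum Finset.univ (fun j _ => hint4 j)]
  refine Finset.sum_congr rfl fun j _ => ?_
  have e1 : ∫ y, softThreshold lam (y j) * y j ∂(Measure.pi γ)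
      = ∫ x, softThreshold lam x * x ∂(γ j) := by
    refine integral_eval γ j (fun x => softThreshold lam x * x) ?_
    have : Continuous (fun x : ℝ => (max (x - lam) 0 - max (-x - lam) 0) * x) := by fun_prop
    refine (this.aestronglyMeasurable).congr (ae_of_all _ fun x => ?_)
    simp only [softThreshold_eq hlam]
  have e2 : ∫ y, softThreshold lam (y j) ∂(Measure.pi γ)
      = ∫ x, softThreshold lam x ∂(γ j) := by
    refine integral_eval γ j (fun x => softThreshold lam x) ?_
    have : Continuous (fun x : ℝ => max (x - lam) 0 - max (-x - lam) 0) := by fun_prop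
    refine (this.aestronglyMeasurable).congr (ae_of_all _ fun x => ?_)
    simp only [softThreshold_eq hlam]
  have e3 : ∫ y, y j ∂(Measure.pi γ) = ∫ x, x ∂(γ j) :=
    integral_eval γ j (fun x => x) continuous_id.aestronglyMeasurable
  have e4 : ∫ y, (if lam < |y j| then (1:ℝ) else 0) ∂(Measure.pi γ)
      = ∫ x, (if lam < |x| then (1:ℝ) else 0) ∂(γ j) :=
    integral_eval γ j _ hmeas4.aestronglyMeasurable
  rw [e1, e2, e3, e4]
  have key := key1d (μ j) v hvne hlam
  rw [hγ]
  rw [key]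
  field_simp
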